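/- Let n ≥ 1 and 0 < C₁ ≤ 1, and let 0 < ε < 2C₁/n. Then there exists K > 0 with the following property: for every n×n real matrix Z with all entries nonnegative satisfying Σ_{i,k} Z_{ik} ≥ K, every n×n permutation matrix ζ* attaining ω*(Z) = max_{σ} Σ_i Z_{i,σ(i)}, and every n×n matrix B with all entries in [0,1] whose every row sum and column sum is at most 1 − C₁ such that Z' = Z − ζ* + B is entrywise nonnegative, one has Σ_{i,k} (Z'_{ik})² − Σ_{i,k} (Z_{ik})² ≤ −ε·Σ_{i,k} Z_{ik}. -/
import Mathlib


/-- The max-weight matching value `ω*(Z) = max_σ Σ_i Z_{i,σ(i)}`. -/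
noncomputable def maxWeight {n : ℕ} (Z : Matrix (Fin n) (Fin n) ℝ) : ℝ :=
  Finset.univ.sup' ⟨1, Finset.mem_univ 1⟩ fun σ : Equiv.Perm (Fin n) => ∑ i, Z i (σ i)

lemma perm_le_maxWeight {n : ℕ} (Z : Matrix (Fin n) (Fin n) ℝ) (σ : Equiv.Perm (Fin n)) :
    ∑ i, Z i (σ i) ≤ maxWeight Z :=
  Finset.le_sup' (fun σ : Equiv.Perm (Fin n) => ∑ i, Z i (σ i)) (Finset.mem_univ σ)

lemma total_le_n_mul_maxWeight {n : ℕ} [NeZero n] (Z : Matrix (Fin n) (Fin n) ℝ) :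
    ∑ i, ∑ k, Z i k ≤ n * maxWeight Z := by
  have h1 : ∑ c : Fin n, ∑ i, Z i ((Equiv.addLeft c) i) = ∑ i, ∑ k, Z i k := by
    rw [Finset.sum_comm]
    refine Finset.sum_congr rfl fun i _ => ?_
    exact Fintype.sum_equiv (Equiv.addRight i) _ _ (fun c => by simp)
  calc ∑ i, ∑ k, Z i k = ∑ c : Fin n, ∑ i, Z i ((Equiv.addLeft c) i) := h1.symm
    _ ≤ ∑ _c : Fin n, maxWeight Z :=
        Finset.sum_le_sum fun c _ => perm_le_maxWeight Z (Equiv.addLeft c)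
    _ = n * maxWeight Z := by simp [Finset.sum_const, nsmul_eq_mul]

lemma ds_le_maxWeight {n : ℕ} (Z S : Matrix (Fin n) (Fin n) ℝ)
    (hZ : ∀ i k, 0 ≤ Z i k) (hS : S ∈ doublyStochastic ℝ (Fin n)) :
    ∑ i, ∑ k, Z i k * S i k ≤ maxWeight Z := by
  obtain ⟨w, hw0, hw1, hwsum⟩ := exists_eq_sum_perm_of_mem_doublyStochastic hS
  have hSe : ∀ i k, S i k = ∑ τ : Equiv.Perm (Fin n), w τ * (τ.permMatrix ℝ) i k := by
    intro i k; rw [← hwsum]; simp [Finset.sum_apply, Matrix.sum_apply]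
  have hinner : ∀ τ : Equiv.Perm (Fin n),
      ∑ i, ∑ k, Z i k * (τ.permMatrix ℝ) i k = ∑ i, Z i (τ i) := by
    intro τ
    refine Finset.sum_congr rfl fun i _ => ?_
    simp [Equiv.Perm.permMatrix, PEquiv.toMatrix_apply, Equiv.toPEquiv_apply,
      mul_ite, Finset.sum_ite_eq, Finset.sum_ite_eq']
  have hpt : ∀ i k, Z i k * S i k = ∑ τ : Equiv.Perm (Fin n), w τ * (Z i k * (τ.permMatrix ℝ) i k) := by
    intro i k; rw [hSe, Finset.mul_sum]
    exact Finset.sum_congr rfl fun τ _ => by ring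
  calc ∑ i, ∑ k, Z i k * S i k
      = ∑ i, ∑ k, ∑ τ : Equiv.Perm (Fin n), w τ * (Z i k * (τ.permMatrix ℝ) i k) :=
        Finset.sum_congr rfl fun i _ => Finset.sum_congr rfl fun k _ => hpt i k
    _ = ∑ i, ∑ τ : Equiv.Perm (Fin n), ∑ k, w τ * (Z i k * (τ.permMatrix ℝ) i k) :=
        Finset.sum_congr rfl fun i _ => Finset.sum_comm
    _ = ∑ τ : Equiv.Perm (Fin n), ∑ i, ∑ k, w τ * (Z i k * (τ.permMatrix ℝ) i k) :=
        Finset.sum_comm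
    _ = ∑ τ : Equiv.Perm (Fin n), w τ * ∑ i, Z i (τ i) := by
        refine Finset.sum_congr rfl fun τ _ => ?_
        rw [← hinner τ, Finset.mul_sum]
        exact Finset.sum_congr rfl fun i _ => (Finset.mul_sum _ _ _).symm
    _ ≤ ∑ τ : Equiv.Perm (Fin n), w τ * maxWeight Z :=
        Finset.sum_le_sum fun τ _ => mul_le_mul_of_nonneg_left (perm_le_maxWeight Z τ) (hw0 τ)
    _ = maxWeight Z := by rw [← Finset.sum_mul, hw1, one_mul]

lemma subDS_le_maxWeight {n : ℕ} [NeZero n] (Z B : Matrix (Fin n) (Fin n) ℝ) (t : ℝ)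
    (hZ : ∀ i k, 0 ≤ Z i k) (hB0 : ∀ i k, 0 ≤ B i k)
    (hrow : ∀ i, ∑ k, B i k ≤ t) (hcol : ∀ k, ∑ i, B i k ≤ t) (ht : 0 ≤ t) :
    ∑ i, ∑ k, Z i k * B i k ≤ t * maxWeight Z := by
  rcases ht.lt_or_eq with ht0 | ht0
  · -- t > 0
    set A : Matrix (Fin n) (Fin n) ℝ := fun i k => B i k / t with hA
    have hA0 : ∀ i k, 0 ≤ A i k := fun i k => div_nonneg (hB0 i k) ht0.le
    set r : Fin n → ℝ := fun i => ∑ k, A i k with hr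
    set c : Fin n → ℝ := fun k => ∑ i, A i k with hc
    have hr1 : ∀ i, r i ≤ 1 := by
      intro i
      have : r i = (∑ k, B i k) / t := by
        rw [hr]; simp only [hA, ← Finset.sum_div]
      rw [this]
      exact div_le_one_of_le₀ (hrow i) ht0.le
    have hc1 : ∀ k, c k ≤ 1 := by
      intro k
      have : c k = (∑ i, B i k) / t := by
        rw [hc]; simp only [hA, ← Finset.sum_div]
      rw [this]
      exact div_le_one_of_le₀ (hcol k) ht0.le
    set s : ℝ := ∑ i, (1 - r i) with hs
    have hs' : s = ∑ k, (1 - c k) := by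
      rw [hs, Finset.sum_sub_distrib, Finset.sum_sub_distrib]
      simp only [hr, hc]
      rw [Finset.sum_comm]
    have hs0 : 0 ≤ s := Finset.sum_nonneg fun i _ => by linarith [hr1 i]
    have key : ∑ i, ∑ k, Z i k * A i k ≤ maxWeight Z := by
      rcases hs0.lt_or_eq with hspos | hszero
      · -- pad A up to a doubly stochastic matrix
        set S : Matrix (Fin n) (Fin n) ℝ :=
          fun i k => A i k + (1 - r i) * (1 - c k) / s with hS
        have hSA : ∀ i k, A i k ≤ S i k := by
          intro i k
          have h3 : 0 ≤ (1 - r i) * (1 - c k) / s :=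
            div_nonneg (mul_nonneg (by linarith [hr1 i]) (by linarith [hc1 k])) hs0
          show A i k ≤ A i k + (1 - r i) * (1 - c k) / s
          linarith
        have hSds : S ∈ doublyStochastic ℝ (Fin n) := by
          rw [mem_doublyStochastic_iff_sum]
          refine ⟨fun i k => le_trans (hA0 i k) (hSA i k), ?_, ?_⟩
          · intro i
            show ∑ k, (A i k + (1 - r i) * (1 - c k) / s) = 1
            rw [Finset.sum_add_distrib]
            rw [show ∑ k, (1 - r i) * (1 - c k) / s = (1 - r i) * (∑ k, (1 - c k)) / s by
              rw [Finset.mul_sum, Finset.sum_div]]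
            rw [← hs', mul_div_assoc, div_self hspos.ne', mul_one]
            have : ∑ k, A i k = r i := rfl
            rw [this]; ring
          · intro k
            show ∑ i, (A i k + (1 - r i) * (1 - c k) / s) = 1
            rw [Finset.sum_add_distrib]
            rw [show ∑ i, (1 - r i) * (1 - c k) / s = (∑ i, (1 - r i)) * (1 - c k) / s by
              rw [Finset.sum_mul, Finset.sum_div]]
            rw [← hs, mul_comm, mul_div_assoc, div_self hspos.ne', mul_one]
            have : ∑ i, A i k = c k := rfl
            rw [this]; ring
        calc ∑ i, ∑ k, Z i k * A i k ≤ ∑ i, ∑ k, Z i k * S i k :=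
              Finset.sum_le_sum fun i _ => Finset.sum_le_sum fun k _ =>
                mul_le_mul_of_nonneg_left (hSA i k) (hZ i k)
          _ ≤ maxWeight Z := ds_le_maxWeight Z S hZ hSds
      · -- A itself is doubly stochastic
        have h0r : ∑ i, (1 - r i) = 0 := by rw [← hs]; exact hszero.symm
        have h0c : ∑ k, (1 - c k) = 0 := by rw [← hs']; exact hszero.symm
        have hri : ∀ i, r i = 1 := by
          intro i
          have := (Finset.sum_eq_zero_iff_of_nonneg
            (fun i _ => by linarith [hr1 i])).1 h0r i (Finset.mem_univ i)
          linarith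
        have hck : ∀ k, c k = 1 := by
          intro k
          have := (Finset.sum_eq_zero_iff_of_nonneg
            (fun k _ => by linarith [hc1 k])).1 h0c k (Finset.mem_univ k)
          linarith
        refine ds_le_maxWeight Z A hZ ?_
        rw [mem_doublyStochastic_iff_sum]
        exact ⟨hA0, fun i => hri i, fun k => hck k⟩
    calc ∑ i, ∑ k, Z i k * B i k = t * ∑ i, ∑ k, Z i k * A i k := by
          rw [Finset.mul_sum]
          refine Finset.sum_congr rfl fun i _ => ?_
          rw [Finset.mul_sum]
          refine Finset.sum_congr rfl fun k _ => ?_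
          show Z i k * B i k = t * (Z i k * (B i k / t))
          field_simp
      _ ≤ t * maxWeight Z := mul_le_mul_of_nonneg_left key ht0.le
  · -- t = 0 forces B = 0
    have hB : ∀ i k, B i k = 0 := by
      intro i k
      have h1 : ∑ k, B i k = 0 :=
        le_antisymm (ht0 ▸ hrow i) (Finset.sum_nonneg fun k _ => hB0 i k)
      exact (Finset.sum_eq_zero_iff_of_nonneg fun k _ => hB0 i k).1 h1 k (Finset.mem_univ k)
    simp [hB, ← ht0]

/-- Strong-stability drift condition (Proposition 2 and Lemma 1,
eqs. (22), (53) of the paper): for `0 < ε < 2C₁/n` there is `K > 0` such that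
whenever the total queue length is at least `K`, the one-step Lyapunov drift of
max-weight entanglement swapping is at most `-ε·|Z|`. -/
theorem stmt_14 (n : ℕ) (hn : 1 ≤ n) (C₁ : ℝ) (hC₁ : 0 < C₁) (hC₁' : C₁ ≤ 1)
    (ε : ℝ) (hε : 0 < ε) (hε' : ε < 2 * C₁ / (n : ℝ)) :
    ∃ K : ℝ, 0 < K ∧
      ∀ (Z : Matrix (Fin n) (Fin n) ℝ), (∀ i k, 0 ≤ Z i k) →
        K ≤ ∑ i, ∑ k, Z i k →
        ∀ (ζstar : Matrix (Fin n) (Fin n) ℝ) (σ : Equiv.Perm (Fin n)),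
          (∀ i k, ζstar i k = if σ i = k then (1 : ℝ) else 0) →
          (∑ i, ∑ k, ζstar i k * Z i k = maxWeight Z) →
          ∀ (B : Matrix (Fin n) (Fin n) ℝ),
            (∀ i k, 0 ≤ B i k) → (∀ i k, B i k ≤ 1) →
            (∀ i, ∑ k, B i k ≤ 1 - C₁) → (∀ k, ∑ i, B i k ≤ 1 - C₁) →
            ∀ (Z' : Matrix (Fin n) (Fin n) ℝ),
              (∀ i k, Z' i k = Z i k - ζstar i k + B i k) →
              (∀ i k, 0 ≤ Z' i k) →
              (∑ i, ∑ k, (Z' i k) ^ 2) - (∑ i, ∑ k, (Z i k) ^ 2)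
                ≤ -ε * ∑ i, ∑ k, Z i k := by
  haveI : NeZero n := ⟨by omega⟩
  have hn0 : (0:ℝ) < n := by exact_mod_cast hn
  have hδ : 0 < 2 * C₁ - ε * n := by
    rw [lt_div_iff₀ hn0] at hε'
    linarith
  refine ⟨(n:ℝ)^3 / (2 * C₁ - ε * n), div_pos (by positivity) hδ, ?_⟩
  intro Z hZ hKZ ζstar σ hζ hζmax B hB0 hB1 hBrow hBcol Z' hZ'def hZ'0
  set W : ℝ := ∑ i, ∑ k, Z i k with hW
  set ω : ℝ := maxWeight Z with hωdef
  have hω : W ≤ n * ω := total_le_n_mul_maxWeight Z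
  have hZB : ∑ i, ∑ k, Z i k * B i k ≤ (1 - C₁) * ω :=
    subDS_le_maxWeight Z B (1 - C₁) hZ hB0 hBrow hBcol (by linarith)
  have hD2 : ∑ i, ∑ k, (B i k - ζstar i k)^2 ≤ (n:ℝ)^2 := by
    have hterm : ∀ i k, (B i k - ζstar i k)^2 ≤ 1 := by
      intro i k
      rw [hζ i k]
      split <;> nlinarith [hB0 i k, hB1 i k]
    calc ∑ i, ∑ k, (B i k - ζstar i k)^2
        ≤ ∑ i : Fin n, ∑ k : Fin n, (1:ℝ) :=
          Finset.sum_le_sum fun i _ => Finset.sum_le_sum fun k _ => hterm i k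
      _ = (n:ℝ)^2 := by simp [Finset.sum_const]; ring
  have expand : ∑ i, ∑ k, (Z' i k)^2
      = (∑ i, ∑ k, (Z i k)^2) + (2 * ∑ i, ∑ k, Z i k * B i k
        - 2 * ∑ i, ∑ k, ζstar i k * Z i k + ∑ i, ∑ k, (B i k - ζstar i k)^2) := by
    calc ∑ i, ∑ k, (Z' i k)^2
        = ∑ i, ∑ k, ((Z i k)^2 + (2 * (Z i k * B i k)
            - 2 * (ζstar i k * Z i k) + (B i k - ζstar i k)^2)) :=
          Finset.sum_congr rfl fun i _ => Finset.sum_congr rfl fun k _ => by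
            rw [hZ'def i k]; ring
      _ = _ := by
          simp only [Finset.sum_add_distrib, Finset.sum_sub_distrib, ← Finset.mul_sum]
  have hn3 : (n:ℝ)^3 ≤ W * (2 * C₁ - ε * n) := by
    have h1 : ((n:ℝ)^3 / (2 * C₁ - ε * n)) * (2 * C₁ - ε * n) = (n:ℝ)^3 :=
      div_mul_cancel₀ _ hδ.ne'
    nlinarith [hKZ]
  have hfin : ε * W + (n:ℝ)^2 ≤ 2 * C₁ * ω := by
    have h1 : C₁ * W ≤ C₁ * ((n:ℝ) * ω) := mul_le_mul_of_nonneg_left hω hC₁.le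
    have h2 : (n:ℝ) * (ε * W + (n:ℝ)^2) ≤ (n:ℝ) * (2 * C₁ * ω) := by nlinarith
    exact le_of_mul_le_mul_left h2 hn0
  rw [expand, hζmax]
  linarith
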